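/- For any cohomology class u on X, swgt(u^n) ≥ n · swgt(u) for every natural number n. -/

import Mathlib

open Topology unitInterval

def NullhomotopicOn {A X : Type*} [TopologicalSpace A] [TopologicalSpace X]
    (φ : C(A, X)) (s : Set A) : Prop :=
  ∃ x : X, (φ.restrict s).Homotopic (ContinuousMap.const s x)

noncomputable def catMap {A X : Type*} [TopologicalSpace A] [TopologicalSpace X]
    (φ : C(A, X)) : ℕ∞ :=
  sInf {k : ℕ∞ | ∃ n : ℕ, k = n ∧ ∃ U : Fin (n + 1) → Set A,
    (∀ i, IsOpen (U i)) ∧ (⋃ i, U i) = Set.univ ∧ ∀ i, NullhomotopicOn φ (U i)}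

noncomputable def catSpace (X : Type*) [TopologicalSpace X] : ℕ∞ :=
  catMap (ContinuousMap.id X)

/-- The wedge of circles indexed by `ι`: the quotient of `ι × Circle` identifying
all points `(i, 1)`. -/
def wedgeSetoid (ι : Type) : Setoid (ι × Circle) where
  r p q := p = q ∨ (p.2 = 1 ∧ q.2 = 1)
  iseqv := ⟨fun _ => Or.inl rfl,
    by rintro p q (rfl | h); exacts [Or.inl rfl, Or.inr ⟨h.2, h.1⟩],
    by rintro p q r (rfl | h) h2
       · exact h2
       · rcases h2 with rfl | h'
         · exact Or.inr h
         · exact Or.inr ⟨h.1, h'.2⟩⟩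

def WedgeCircles (ι : Type) : Type := Quotient (wedgeSetoid ι)

noncomputable instance (ι : Type) : TopologicalSpace (WedgeCircles ι) :=
  letI : TopologicalSpace ι := ⊥
  instTopologicalSpaceQuotient

/-- An (abstract) cohomology theory in degrees `n : ℕ` with coefficients `G`, modelling
Alexander–Spanier cohomology: contravariantly functorial, homotopy invariant, with a
distinguished zero class, and vanishing above degree 1 on wedges of circles. -/
structure CohomologyTheory (G : Type) : Type 1 where
  H : ℕ → TopCat.{0} → Type
  zero : ∀ n X, H n X
  pull : ∀ {n : ℕ} {X Y : TopCat.{0}}, C(X, Y) → H n Y → H n X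
  pull_id : ∀ {n : ℕ} {X : TopCat.{0}} (u : H n X), pull (ContinuousMap.id X) u = u
  pull_comp : ∀ {n : ℕ} {X Y Z : TopCat.{0}} (f : C(X, Y)) (g : C(Y, Z)) (u : H n Z),
    pull (g.comp f) u = pull f (pull g u)
  pull_zero : ∀ {n : ℕ} {X Y : TopCat.{0}} (f : C(X, Y)), pull f (zero n Y) = zero n X
  homotopy_inv : ∀ {n : ℕ} {X Y : TopCat.{0}} (f g : C(X, Y)), f.Homotopic g →
    ∀ u : H n Y, pull f u = pull g u
  wedge_acyclic : ∀ (ι : Type) (n : ℕ), 1 < n →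
    ∀ u : H n (TopCat.of (WedgeCircles ι)), u = zero n (TopCat.of (WedgeCircles ι))

/-- Strict category weight of a cohomology class. -/
noncomputable def swgt {G : Type} (T : CohomologyTheory G) {n : ℕ} {X : TopCat.{0}}
    (u : T.H n X) : ℕ∞ :=
  sSup {k : ℕ∞ | ∀ (A : TopCat.{0}), T2Space A → ParacompactSpace A →
    ∀ φ : C(A, X), catMap φ < k → T.pull φ u = T.zero n A}

/-- An abstract cohomology theory with cup products (coefficients in a ring `R`),
natural and satisfying the relative-vanishing property for open covers. -/
structure RingCohomologyTheory (R : Type) extends CohomologyTheory R where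
  cup : ∀ {m n : ℕ} {X : TopCat.{0}}, H m X → H n X → H (m + n) X
  cup_pull : ∀ {m n : ℕ} {X Y : TopCat.{0}} (f : C(X, Y)) (u : H m Y) (v : H n Y),
    pull f (cup u v) = cup (pull f u) (pull f v)
  cup_vanish : ∀ {m n : ℕ} {X : TopCat.{0}} (B C : Set X), IsOpen B → IsOpen C →
    B ∪ C = Set.univ → ∀ (u : H m X) (v : H n X),
    pull (⟨Subtype.val, continuous_subtype_val⟩ : C(TopCat.of B, X)) u = zero m (TopCat.of B) →
    pull (⟨Subtype.val, continuous_subtype_val⟩ : C(TopCat.of C, X)) v = zero n (TopCat.of C) →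
    cup u v = zero (m + n) X

/-- Degree cast. -/
def CohomologyTheory.castDeg {G : Type} (T : CohomologyTheory G) {m n : ℕ} {X : TopCat.{0}}
    (h : m = n) (u : T.H m X) : T.H n X := h ▸ u

/-- `T.cupPow u n` is the `(n+1)`-st cup power `u^{n+1}`. -/
noncomputable def RingCohomologyTheory.cupPow {R : Type} (T : RingCohomologyTheory R)
    {q : ℕ} {X : TopCat.{0}} (u : T.H q X) : (n : ℕ) → T.H (q * (n + 1)) X
  | 0 => T.toCohomologyTheory.castDeg (mul_one q).symm u
  | n + 1 => T.toCohomologyTheory.castDeg (by ring)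
      (T.cup u (T.cupPow u n))

/-!
Strict category weight is superadditive under cup products. If `catMap φ < a + b`, a cover of
the domain by nullhomotopic open sets splits into at most `a` and at most `b` of its members.
Shrinking the two unions, via Urysohn's lemma, to cozero sets `B` and `C` keeps them open,
covering and paracompact (a cozero set of a paracompact space is paracompact), so `u` vanishes
on `B`, `v` on `C`, and hence `u ⌣ v` vanishes. Induction on the exponent finishes the proof,
the case `swgt u = 0` being trivial.
-/

open Set Filter

section Paracompact

variable {X : Type*} [TopologicalSpace X]

theorem LocallyFinite.of_subset_prod {ι κ : Type*} {O : ι → Set X} {t : ι × κ → Set X}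
    (hO : LocallyFinite O) (ht : ∀ p, t p ⊆ O p.1)
    (hslice : ∀ i, LocallyFinite fun k => t (i, k)) : LocallyFinite t := by
  intro x
  obtain ⟨W, hW, hfin⟩ := hO x
  choose W' hW' hfin' using fun i => hslice i x
  refine ⟨W ∩ ⋂ i ∈ {i | (O i ∩ W).Nonempty}, W' i,
    inter_mem hW ((biInter_mem hfin).2 fun i _ => hW' i), ?_⟩
  refine (hfin.biUnion fun i _ => (hfin' i).image (Prod.mk i)).subset ?_
  rintro ⟨i, k⟩ ⟨y, hyt, hyW, hyW'⟩
  have hi : (O i ∩ W).Nonempty := ⟨y, ht _ hyt, hyW⟩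
  exact mem_biUnion hi ⟨k, ⟨y, hyt, mem_iInter₂.1 hyW' i hi⟩, rfl⟩

theorem locallyFinite_preimage_Ioo_intCast {g : X → ℝ} (hg : Continuous g) :
    LocallyFinite fun n : ℤ => g ⁻¹' Ioo ((n : ℝ) - 1) (n + 1) :=
  LocallyFinite.preimage_continuous (locallyFinite_Ioo_of_tendsto
    (tendsto_atTop_add_const_right _ _ tendsto_intCast_atTop_atTop)
    (tendsto_atBot_add_const_right _ _ (tendsto_intCast_atBot_iff.2 tendsto_id))) hg

/-- Refine the cover on each sublevel set `g ≤ n` inside the ambient space, cut the refinement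
down to the band `n - 1 < g < n + 1`, and use that the bands are locally finite. -/
theorem paracompactSpace_of_isClosed_image_sublevel [ParacompactSpace X] {S : Set X}
    {g : S → ℝ} (hg : Continuous g) (hclosed : ∀ c : ℝ, IsClosed (Subtype.val '' {x | g x ≤ c})) :
    ParacompactSpace S := by
  refine ⟨fun α s hso hsu => ?_⟩
  choose s' hs'o hs' using fun a => isOpen_induced_iff.1 (hso a)
  set K : ℤ → Set X := fun n => Subtype.val '' {x | g x ≤ n}
  have hcover : ∀ n, ⋃ i, Sum.elim s' (fun _ : Unit => (K n)ᶜ) i = univ := by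
    intro n
    refine eq_univ_of_forall fun x => ?_
    by_cases hx : x ∈ K n
    · obtain ⟨y, -, rfl⟩ := hx
      obtain ⟨a, hya⟩ := mem_iUnion.1 (hsu ▸ mem_univ y)
      exact mem_iUnion.2 ⟨Sum.inl a, by rwa [← hs' a] at hya⟩
    · exact mem_iUnion.2 ⟨Sum.inr (), hx⟩
  choose v hvo hvcover hvlf hvsub using fun n =>
    precise_refinement _ (Sum.forall.2 ⟨hs'o, fun _ => (hclosed (n : ℤ)).isOpen_compl⟩) (hcover n)
  refine ⟨ℤ × α, fun p => Subtype.val ⁻¹' v p.1 (Sum.inl p.2) ∩ g ⁻¹' Ioo (p.1 - 1) (p.1 + 1),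
    fun p => ((hvo _ _).preimage continuous_subtype_val).inter (isOpen_Ioo.preimage hg), ?_,
    .of_subset_prod (locallyFinite_preimage_Ioo_intCast hg) (fun _ => inter_subset_right)
      fun n => ((hvlf n).comp_injective Sum.inl_injective).preimage_continuous
        continuous_subtype_val |>.subset fun _ => inter_subset_left,
    fun p => ⟨p.2, fun y hy => by rw [← hs']; exact hvsub _ _ hy.1⟩⟩
  refine eq_univ_of_forall fun y => ?_
  obtain ⟨i, hyi⟩ := mem_iUnion.1 (hvcover ⌈g y⌉ ▸ mem_univ (y : X))
  rcases i with a | ⟨⟩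
  · refine mem_iUnion.2 ⟨(⌈g y⌉, a), hyi, ?_, ?_⟩
    · linarith [Int.ceil_lt_add_one (g y)]
    · linarith [Int.le_ceil (g y)]
  · exact absurd ⟨y, Int.le_ceil (g y), rfl⟩ (hvsub _ _ hyi)

/-- `(g - f)⁻¹` is an exhaustion function of `{f < g}` with closed sublevel sets. -/
theorem paracompactSpace_setOf_lt [ParacompactSpace X] {f g : X → ℝ} (hf : Continuous f)
    (hg : Continuous g) : ParacompactSpace {x | f x < g x} := by
  refine paracompactSpace_of_isClosed_image_sublevel (g := fun x => (g x - f x)⁻¹)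
    ((hg.comp continuous_subtype_val).sub (hf.comp continuous_subtype_val) |>.inv₀
      fun x => (sub_pos.2 x.2).ne') fun c => ?_
  rcases le_or_gt c 0 with hc | hc
  · convert isClosed_empty
    refine image_eq_empty.2 (eq_empty_of_forall_notMem fun x hx => ?_)
    exact (inv_pos.2 (sub_pos.2 x.2)).not_ge (hx.trans hc)
  · convert isClosed_le continuous_const (hg.sub hf)
    ext x
    refine ⟨?_, fun hx => ?_⟩
    · rintro ⟨y, hy, rfl⟩
      exact (inv_le_comm₀ (sub_pos.2 y.2) hc).1 hy
    · have hx : c⁻¹ ≤ g x - f x := hx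
      have hpos : f x < g x := sub_pos.1 ((inv_pos.2 hc).trans_le hx)
      exact ⟨⟨x, hpos⟩, (inv_le_comm₀ (sub_pos.2 hpos) hc).2 hx, rfl⟩

/-- Take the cozero sets of an Urysohn function separating `Vᶜ` from `Wᶜ`. -/
theorem exists_paracompact_open_cover_subset [T2Space X] [ParacompactSpace X] {V W : Set X}
    (hV : IsOpen V) (hW : IsOpen W) (hVW : V ∪ W = univ) :
    ∃ B C : Set X, IsOpen B ∧ IsOpen C ∧ B ∪ C = univ ∧ B ⊆ V ∧ C ⊆ W ∧
      ParacompactSpace B ∧ ParacompactSpace C := by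
  have hdisj : Disjoint Vᶜ Wᶜ :=
    disjoint_compl_right_iff_subset.2 (compl_subset_iff_union.2 hVW)
  obtain ⟨f, hfV, hfW, -⟩ :=
    exists_continuous_zero_one_of_isClosed hV.isClosed_compl hW.isClosed_compl hdisj
  refine ⟨{x | 0 < f x}, {x | f x < 1}, isOpen_lt continuous_const f.continuous,
    isOpen_lt f.continuous continuous_const, ?_, fun x hx => ?_, fun x hx => ?_,
    paracompactSpace_setOf_lt continuous_const f.continuous,
    paracompactSpace_setOf_lt f.continuous continuous_const⟩
  · exact eq_univ_of_forall fun x => (lt_or_ge 0 (f x)).imp id fun h => h.trans_lt one_pos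
  · by_contra hxV
    exact (hx : 0 < f x).ne' (hfV hxV)
  · by_contra hxW
    exact (hx : f x < 1).ne (hfW hxW)

end Paracompact

section Category

variable {A X Y : Type*} [TopologicalSpace A] [TopologicalSpace X] [TopologicalSpace Y]

theorem NullhomotopicOn.comp {φ : C(A, X)} {s : Set A} (h : NullhomotopicOn φ s) (g : C(Y, A)) :
    NullhomotopicOn (φ.comp g) (g ⁻¹' s) := by
  obtain ⟨x, hx⟩ := h
  let g' : C(g ⁻¹' s, s) := ⟨fun y => ⟨g y, y.2⟩, by fun_prop⟩
  exact ⟨x, hx.comp (ContinuousMap.Homotopic.refl g')⟩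

theorem catMap_restrict_lt_of_subset_iUnion (φ : C(A, X)) {s : Set A} {k : ℕ} [NeZero k]
    (U : Fin k → Set A) (hUo : ∀ i, IsOpen (U i)) (hsU : s ⊆ ⋃ i, U i)
    (hUn : ∀ i, NullhomotopicOn φ (U i)) : catMap (φ.restrict s) < k := by
  obtain ⟨n, rfl⟩ := Nat.exists_eq_succ_of_ne_zero (NeZero.ne k)
  have hcover : ⋃ i, Subtype.val ⁻¹' U i = (univ : Set s) := by
    rw [← preimage_iUnion]
    exact preimage_val_eq_univ_of_subset hsU
  have hle : catMap (φ.restrict s) ≤ n := sInf_le ⟨n, rfl, fun i => Subtype.val ⁻¹' U i,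
    fun i => (hUo i).preimage continuous_subtype_val, hcover,
    fun i => (hUn i).comp ⟨Subtype.val, continuous_subtype_val⟩⟩
  exact hle.trans_lt (by exact_mod_cast n.lt_succ_self)

theorem exists_open_cover_catMap_restrict_lt [T2Space A] [ParacompactSpace A] (φ : C(A, X))
    {n j k : ℕ} [NeZero j] [NeZero k] (hj : j ≤ n + 1) (hk : k ≤ n + 1) (hjk : n + 1 ≤ j + k)
    (U : Fin (n + 1) → Set A) (hUo : ∀ i, IsOpen (U i)) (hU : ⋃ i, U i = univ)
    (hUn : ∀ i, NullhomotopicOn φ (U i)) :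
    ∃ B C : Set A, IsOpen B ∧ IsOpen C ∧ B ∪ C = univ ∧ ParacompactSpace B ∧
      ParacompactSpace C ∧ catMap (φ.restrict B) < j ∧ catMap (φ.restrict C) < k := by
  let first : Fin j → Fin (n + 1) := fun i => ⟨i, by omega⟩
  let last : Fin k → Fin (n + 1) := fun i => ⟨n + 1 - k + i, by omega⟩
  have hcover : (⋃ i, U (first i)) ∪ ⋃ i, U (last i) = univ := by
    refine eq_univ_of_forall fun x => ?_
    obtain ⟨i, hi⟩ := mem_iUnion.1 (hU ▸ mem_univ x)
    by_cases hij : (i : ℕ) < j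
    · exact Or.inl (mem_iUnion.2 ⟨⟨i, hij⟩, hi⟩)
    · refine Or.inr (mem_iUnion.2 ⟨⟨i - (n + 1 - k), by omega⟩, ?_⟩)
      rwa [show last _ = i from Fin.ext (by simp only [last]; omega)]
  obtain ⟨B, C, hB, hC, hBC, hBV, hCW, hBp, hCp⟩ := exists_paracompact_open_cover_subset
    (isOpen_iUnion fun i => hUo _) (isOpen_iUnion fun i => hUo _) hcover
  exact ⟨B, C, hB, hC, hBC, hBp, hCp,
    catMap_restrict_lt_of_subset_iUnion φ _ (fun i => hUo _) hBV fun i => hUn _,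
    catMap_restrict_lt_of_subset_iUnion φ _ (fun i => hUo _) hCW fun i => hUn _⟩

theorem exists_open_cover_catMap_restrict_lt_of_lt_add [T2Space A] [ParacompactSpace A]
    (φ : C(A, X)) {a b : ℕ∞} (ha : a ≠ 0) (hb : b ≠ 0) (h : catMap φ < a + b) :
    ∃ B C : Set A, IsOpen B ∧ IsOpen C ∧ B ∪ C = univ ∧ ParacompactSpace B ∧
      ParacompactSpace C ∧ catMap (φ.restrict B) < a ∧ catMap (φ.restrict C) < b := by
  obtain ⟨_, ⟨n, rfl, U, hUo, hU, hUn⟩, hn⟩ := sInf_lt_iff.1 h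
  obtain ⟨j, k, hj0, hk0, hj, hk, hjk, hja, hkb⟩ : ∃ j k : ℕ, j ≠ 0 ∧ k ≠ 0 ∧ j ≤ n + 1 ∧
      k ≤ n + 1 ∧ n + 1 ≤ j + k ∧ (j : ℕ∞) ≤ a ∧ (k : ℕ∞) ≤ b := by
    -- split at `a` if the cover is longer than `a`, otherwise take all of it and its last member
    rcases le_or_gt a n with han | hna
    · lift a to ℕ using ne_top_of_le_ne_top (ENat.natCast_ne_top n) han
      have ha : a ≠ 0 := by exact_mod_cast ha
      have han : a ≤ n := by exact_mod_cast han
      have hnb : (n + 1 - a : ℕ) ≤ b := by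
        rw [ENat.natCast_sub, tsub_le_iff_left]
        exact_mod_cast Order.add_one_le_of_lt hn
      exact ⟨a, n + 1 - a, ha, by omega, by omega, by omega, by omega, le_rfl, hnb⟩
    · exact ⟨n + 1, 1, by omega, one_ne_zero, le_rfl, by omega, by omega,
        Order.add_one_le_of_lt hna, Order.one_le_iff_pos.2 (pos_iff_ne_zero.2 hb)⟩
  have : NeZero j := ⟨hj0⟩
  have : NeZero k := ⟨hk0⟩
  obtain ⟨B, C, hB, hC, hBC, hBp, hCp, hφB, hφC⟩ :=
    exists_open_cover_catMap_restrict_lt φ hj hk hjk U hUo hU hUn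
  exact ⟨B, C, hB, hC, hBC, hBp, hCp, hφB.trans_le hja, hφC.trans_le hkb⟩

end Category

namespace CohomologyTheory

variable {G : Type} (T : CohomologyTheory G)

def VanishesBelow {n : ℕ} {X : TopCat.{0}} (u : T.H n X) (k : ℕ∞) : Prop :=
  ∀ (A : TopCat.{0}), T2Space A → ParacompactSpace A →
    ∀ φ : C(A, X), catMap φ < k → T.pull φ u = T.zero n A

variable {T}

theorem vanishesBelow_swgt {n : ℕ} {X : TopCat.{0}} (u : T.H n X) :
    T.VanishesBelow u (swgt T u) := fun A hA2 hAp φ hφ => by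
  obtain ⟨k, hk, hφk⟩ := lt_sSup_iff.1 hφ
  exact hk A hA2 hAp φ hφk

theorem VanishesBelow.le_swgt {n : ℕ} {X : TopCat.{0}} {u : T.H n X} {k : ℕ∞}
    (h : T.VanishesBelow u k) : k ≤ swgt T u :=
  le_sSup h

theorem swgt_castDeg {m n : ℕ} {X : TopCat.{0}} (h : m = n) (u : T.H m X) :
    swgt T (T.castDeg h u) = swgt T u := by
  subst h
  rfl

end CohomologyTheory

section Cup

variable {R : Type} {T : RingCohomologyTheory R} {p q : ℕ} {X : TopCat.{0}}

theorem CohomologyTheory.VanishesBelow.cup {u : T.H p X} {v : T.H q X} {a b : ℕ∞}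
    (hu : T.VanishesBelow u a) (hv : T.VanishesBelow v b) (ha : a ≠ 0) (hb : b ≠ 0) :
    T.VanishesBelow (T.cup u v) (a + b) := by
  intro A _ _ φ hφ
  obtain ⟨B, C, hB, hC, hBC, hBp, hCp, hφB, hφC⟩ :=
    exists_open_cover_catMap_restrict_lt_of_lt_add φ ha hb hφ
  rw [T.cup_pull]
  refine T.cup_vanish B C hB hC hBC _ _ ?_ ?_
  · rw [← T.pull_comp]
    exact hu (TopCat.of B) (inferInstanceAs (T2Space B)) hBp _ hφB
  · rw [← T.pull_comp]
    exact hv (TopCat.of C) (inferInstanceAs (T2Space C)) hCp _ hφC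

theorem RingCohomologyTheory.swgt_add_le_swgt_cup {u : T.H p X} {v : T.H q X}
    (hu : swgt T.toCohomologyTheory u ≠ 0) (hv : swgt T.toCohomologyTheory v ≠ 0) :
    swgt T.toCohomologyTheory u + swgt T.toCohomologyTheory v ≤
      swgt T.toCohomologyTheory (T.cup u v) :=
  ((CohomologyTheory.vanishesBelow_swgt u).cup (CohomologyTheory.vanishesBelow_swgt v) hu
    hv).le_swgt

end Cup

open CohomologyTheory RingCohomologyTheory

theorem swgt_cupPow_ge_general {R : Type} (T : RingCohomologyTheory R) (X : TopCat.{0})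
    {q : ℕ} (u : T.H q X) (m : ℕ) :
    ((m : ℕ∞) + 1) * swgt T.toCohomologyTheory u ≤
      swgt T.toCohomologyTheory (T.cupPow u m) := by
  induction m with
  | zero => simp [cupPow, swgt_castDeg]
  | succ m ih =>
    set w := swgt T.toCohomologyTheory u
    rcases eq_or_ne w 0 with hw | hw
    · simp [hw]
    have hpow : swgt T.toCohomologyTheory (T.cupPow u m) ≠ 0 :=
      ne_bot_of_le_ne_bot (mul_ne_zero (by simp) hw) ih
    calc ((↑(m + 1) : ℕ∞) + 1) * w = w + ((m : ℕ∞) + 1) * w := by push_cast; ring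
      _ ≤ w + swgt T.toCohomologyTheory (T.cupPow u m) := add_le_add_right ih w
      _ ≤ swgt T.toCohomologyTheory (T.cup u (T.cupPow u m)) := swgt_add_le_swgt_cup hw hpow
      _ = swgt T.toCohomologyTheory (T.cupPow u (m + 1)) := (swgt_castDeg _ _).symm

/-- `swgt (u^n) ≥ n · swgt u` for all `n ≥ 1` (here `T.cupPow u m` is the `(m+1)`-st
cup power of `u`). -/
theorem swgt_cupPow_ge {R : Type} [CommRing R] (T : RingCohomologyTheory R) (X : TopCat.{0})
    [T2Space X] [ParacompactSpace X]
    {q : ℕ} (u : T.H q X) (m : ℕ) :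
    ((m : ℕ∞) + 1) * swgt T.toCohomologyTheory u ≤
      swgt T.toCohomologyTheory (T.cupPow u m) :=
  swgt_cupPow_ge_general T X u m
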